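/- Let T(x) = 2x (mod 1) be the doubling map on [0,1). For every ρ ∈ [0,1) there exists a T-invariant Borel probability measure μ on [0,1) whose barycentre equals ρ, i.e. ∫ x dμ(x) = ρ. (In particular, the set M_ρ of ×2-invariant Borel probability measures with barycentre ρ is nonempty.) -/

import Mathlib

/-!
Both `δ₀` and the uniform measure on a periodic orbit of `T` are `T`-invariant, hence so is every
convex combination of them. The point `1 - 1 / (2ⁿ - 1)`, with binary expansion `0.(1⋯10)` of
period `n`, has orbit `{1 - 2ᵏ / (2ⁿ - 1) | k < n}`, whose uniform measure has barycentre
`1 - 1 / n`. Taking `n` with `ρ < 1 - 1 / n`, the mixture `(1 - t) δ₀ + t ν` with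
`t = ρ / (1 - 1 / n)` has barycentre `ρ`.
-/

open MeasureTheory Function Finset
open scoped ENNReal

namespace MeasureTheory.Measure

variable {α : Type*} [MeasurableSpace α]

noncomputable def orbitMeasure (f : α → α) (x : α) (n : ℕ) : Measure α :=
  (n : ℝ≥0∞)⁻¹ • ∑ k ∈ range n, dirac (f^[k] x)

variable {f : α → α} {x : α} {n : ℕ}

theorem isProbabilityMeasure_orbitMeasure (hn : n ≠ 0) :
    IsProbabilityMeasure (orbitMeasure f x n) := by
  constructor
  rw [orbitMeasure, smul_apply, finsetSum_apply]
  simp only [measure_univ, sum_const, card_range, nsmul_eq_mul, mul_one, smul_eq_mul]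
  exact ENNReal.inv_mul_cancel (Nat.cast_ne_zero.2 hn) (ENNReal.natCast_ne_top n)

theorem measurePreserving_orbitMeasure (hf : Measurable f) (hx : IsPeriodicPt f n x) :
    MeasurePreserving f (orbitMeasure f x n) (orbitMeasure f x n) := by
  refine ⟨hf, ?_⟩
  have hshift : ∑ k ∈ range n, dirac (f^[k + 1] x) = ∑ k ∈ range n, dirac (f^[k] x) := by
    cases n with
    | zero => simp
    | succ n =>
      rw [sum_range_succ, sum_range_succ' (fun k => dirac (f^[k] x)), hx.eq, iterate_zero_apply]
  simp only [orbitMeasure, Measure.map_smul, map_finset_sum hf.aemeasurable, map_dirac' hf,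
    ← iterate_succ_apply' f, hshift]

theorem measurePreserving_dirac (hf : Measurable f) (hx : IsFixedPt f x) :
    MeasurePreserving f (dirac x) (dirac x) :=
  ⟨hf, by rw [map_dirac' hf, hx.eq]⟩

variable [MeasurableSingletonClass α] {E : Type*} [NormedAddCommGroup E]

theorem integrable_orbitMeasure (hn : n ≠ 0) (g : α → E) : Integrable g (orbitMeasure f x n) :=
  (integrable_finsetSum_measure.2 fun _ _ => integrable_dirac enorm_lt_top).smul_measure
    (ENNReal.inv_ne_top.2 (Nat.cast_ne_zero.2 hn))

theorem integral_orbitMeasure [NormedSpace ℝ E] [CompleteSpace E] (g : α → E) :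
    ∫ y, g y ∂orbitMeasure f x n = (n : ℝ)⁻¹ • ∑ k ∈ range n, g (f^[k] x) := by
  rw [orbitMeasure, integral_smul_measure,
    integral_finsetSum_measure fun k _ => integrable_dirac enorm_lt_top]
  simp [integral_dirac]

end MeasureTheory.Measure

section Mixture

variable {α : Type*} [MeasurableSpace α] {μ ν : Measure α} {s t : ℝ≥0∞}

theorem isProbabilityMeasure_smul_add_smul [IsProbabilityMeasure μ] [IsProbabilityMeasure ν]
    (h : s + t = 1) : IsProbabilityMeasure (s • μ + t • ν) :=
  ⟨by simp [h]⟩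

theorem integral_smul_add_smul_measure {E : Type*} [NormedAddCommGroup E] [NormedSpace ℝ E]
    {g : α → E} (hμ : Integrable g μ) (hν : Integrable g ν) (hs : s ≠ ∞) (ht : t ≠ ∞) :
    ∫ y, g y ∂(s • μ + t • ν) = s.toReal • ∫ y, g y ∂μ + t.toReal • ∫ y, g y ∂ν := by
  rw [integral_add_measure (hμ.smul_measure hs) (hν.smul_measure ht), integral_smul_measure,
    integral_smul_measure]

end Mixture

open Measure

noncomputable def doublingMap (x : ℝ) : ℝ := Int.fract (2 * x)

theorem measurable_doublingMap : Measurable doublingMap :=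
  measurable_fract.comp (measurable_const_mul 2)

theorem doublingMap_fract (y : ℝ) : doublingMap (Int.fract y) = Int.fract (2 * y) := by
  rw [doublingMap, Int.fract_eq_fract]
  exact ⟨-2 * ⌊y⌋, by rw [Int.fract]; push_cast; ring⟩

theorem doublingMap_iterate_fract (k : ℕ) (y : ℝ) :
    doublingMap^[k] (Int.fract y) = Int.fract (2 ^ k * y) := by
  induction k with
  | zero => simp
  | succ k ih => rw [iterate_succ_apply', ih, doublingMap_fract, pow_succ', mul_assoc]

noncomputable def doublingPeriodicPoint (n : ℕ) : ℝ := Int.fract (-1 / (2 ^ n - 1))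

theorem isPeriodicPt_doublingPeriodicPoint (n : ℕ) :
    IsPeriodicPt doublingMap n (doublingPeriodicPoint n) := by
  rcases Nat.eq_zero_or_pos n with rfl | hn
  · exact isPeriodicPt_zero _ _
  have hp : (2 : ℝ) ^ n - 1 ≠ 0 := by
    have : (1 : ℝ) < 2 ^ n := one_lt_pow₀ one_lt_two hn.ne'
    linarith
  rw [IsPeriodicPt, IsFixedPt, doublingPeriodicPoint, doublingMap_iterate_fract,
    Int.fract_eq_fract]
  exact ⟨-1, by field_simp; ring⟩

theorem sum_iterate_doublingPeriodicPoint {n : ℕ} (hn : 2 ≤ n) :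
    ∑ k ∈ range n, doublingMap^[k] (doublingPeriodicPoint n) = n - 1 := by
  have hp : (2 : ℝ) ^ (n - 1) < 2 ^ n - 1 := by
    have h2 : (2 : ℝ) ≤ 2 ^ (n - 1) := le_self_pow₀ one_le_two (by omega)
    have : (2 : ℝ) ^ n = 2 * 2 ^ (n - 1) := by rw [← pow_succ']; congr 1; omega
    linarith
  have hp0 : (0 : ℝ) < 2 ^ n - 1 := by linarith [pow_pos (two_pos : (0 : ℝ) < 2) (n - 1)]
  have hterm : ∀ k ∈ range n,
      doublingMap^[k] (doublingPeriodicPoint n) = 1 - 2 ^ k / (2 ^ n - 1) := by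
    intro k hk
    have hk_lt : (2 : ℝ) ^ k < 2 ^ n - 1 :=
      (pow_le_pow_right₀ one_le_two (Nat.le_pred_of_lt (mem_range.1 hk))).trans_lt hp
    have hfract : Int.fract ((2 : ℝ) ^ k / (2 ^ n - 1)) = 2 ^ k / (2 ^ n - 1) :=
      Int.fract_eq_self.2 ⟨by positivity, (div_lt_one hp0).2 hk_lt⟩
    rw [doublingPeriodicPoint, doublingMap_iterate_fract, mul_div, mul_neg_one, neg_div,
      Int.fract_neg (by rw [hfract]; positivity), hfract]
  rw [sum_congr rfl hterm, sum_sub_distrib, ← sum_div, geom_sum_eq (by norm_num : (2 : ℝ) ≠ 1)]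
  norm_num [hp0.ne']

theorem integral_orbitMeasure_doublingPeriodicPoint {n : ℕ} (hn : 2 ≤ n) :
    ∫ y, y ∂orbitMeasure doublingMap (doublingPeriodicPoint n) n = 1 - 1 / n := by
  rw [integral_orbitMeasure, sum_iterate_doublingPeriodicPoint hn, smul_eq_mul]
  field_simp

/-- For the doubling map `T(x) = 2x (mod 1)` on `[0,1)` and every `ρ ∈ [0,1)`, there exists a
`T`-invariant Borel probability measure with barycentre `ρ`, i.e. `∫ x dμ(x) = ρ`; in
particular the set `M_ρ` of `×2`-invariant Borel probability measures with barycentre `ρ` is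
nonempty. -/
theorem exists_doubling_invariant_measure_with_barycentre
    (ρ : ℝ) (hρ : ρ ∈ Set.Ico (0 : ℝ) 1) :
    ∃ μ : Measure ℝ, IsProbabilityMeasure μ ∧
      MeasurePreserving (fun x => Int.fract (2 * x)) μ μ ∧
      ∫ x, x ∂μ = ρ := by
  obtain ⟨hρ0, hρ1⟩ := hρ
  obtain ⟨m, hm⟩ := exists_nat_one_div_lt (sub_pos.2 hρ1)
  set n := m + 2
  set b : ℝ := 1 - 1 / n
  have hρb : ρ < b := by
    have : (1 : ℝ) / n < 1 / (m + 1) := by gcongr; push_cast [n]; linarith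
    linarith
  have hb : 0 < b := hρ0.trans_lt hρb
  set t := ρ / b
  have ht0 : 0 ≤ t := by positivity
  have ht1 : t ≤ 1 := (div_le_one hb).2 hρb.le
  set ν := orbitMeasure doublingMap (doublingPeriodicPoint n) n
  have : IsProbabilityMeasure ν := isProbabilityMeasure_orbitMeasure (by omega)
  refine ⟨ENNReal.ofReal (1 - t) • dirac 0 + ENNReal.ofReal t • ν,
    isProbabilityMeasure_smul_add_smul ?_, ?_, ?_⟩
  · rw [← ENNReal.ofReal_add (by linarith) ht0]; simp
  · have h0 : MeasurePreserving doublingMap (dirac 0) (dirac 0) :=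
      measurePreserving_dirac measurable_doublingMap (by simp [IsFixedPt, doublingMap])
    exact (h0.smul_measure _).add_measure ((measurePreserving_orbitMeasure measurable_doublingMap
      (isPeriodicPt_doublingPeriodicPoint n)).smul_measure _)
  · rw [integral_smul_add_smul_measure (integrable_dirac enorm_lt_top)
      (integrable_orbitMeasure (by omega) _) ENNReal.ofReal_ne_top ENNReal.ofReal_ne_top,
      integral_dirac, integral_orbitMeasure_doublingPeriodicPoint (by omega),
      ENNReal.toReal_ofReal ht0, smul_eq_mul, smul_eq_mul, mul_zero, zero_add]
    exact div_mul_cancel₀ ρ hb.ne'
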